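/- arXiv:0902.2119 — 2 statements merged into one kernel-verified Lean document; each statement's English description precedes it below -/
import Mathlib

section
/- A group G is residually non-abelian free (i.e., every nontrivial element survives under some homomorphism to a free group with nonabelian image) if and only if G is residually free and has trivial center. -/
/-!
The centralizer of a nontrivial element `a` of a free group is free by Nielsen–Schreier and has
`a` in its center; free groups of rank at least two have trivial center, so the centralizer has
rank at most one and is abelian (commutative transitivity). Hence a central element of `G`
that survives under a map to a free group forces its image to be abelian. Conversely, if the
center of `G` is trivial, every `g ≠ 1` has a nontrivial commutator `⁅h, g⁆`, and any map to `F` not killing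
`⁅h, g⁆` has nonabelian image and does not kill `g`.
-/

open scoped commutatorElement

namespace FreeGroup

variable {α : Type*}

theorem toWord_mul_of [DecidableEq α] {g : FreeGroup α} {y : α}
    (hy : ∀ l ∈ g.toWord.getLast?, l.1 ≠ y) :
    (g * of y).toWord = g.toWord ++ [(y, true)] := by
  rw [toWord_mul, toWord_of]
  refine IsReduced.reduce_eq (List.IsChain.append isReduced_toWord IsReduced.singleton ?_)
  intro l hl z hz h
  rw [List.head?_cons, Option.mem_some_iff] at hz
  subst hz
  exact absurd h (hy l hl)

/-- Pick `y` different from the last letter of `g`: then `g * of y` has reduced word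
`g.toWord ++ [(y, true)]`, whereas by length the word of `of y * g` is `(y, true) :: g.toWord`,
whose last letter is not `(y, true)`. -/
theorem center_eq_bot [Nontrivial α] : Subgroup.center (FreeGroup α) = ⊥ := by
  classical
  refine (Subgroup.eq_bot_iff_forall _).2 fun g hg => ?_
  by_contra hg1
  obtain ⟨ℓ, hℓ⟩ : ∃ ℓ, g.toWord.getLast? = some ℓ :=
    Option.ne_none_iff_exists'.1 (by simpa [toWord_eq_nil_iff] using hg1)
  obtain ⟨y, hy⟩ := exists_ne ℓ.1
  have hright : (g * of y).toWord = g.toWord ++ [(y, true)] :=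
    toWord_mul_of (by simpa [hℓ] using hy.symm)
  have hcomm : of y * g = g * of y := Subgroup.mem_center_iff.1 hg (of y)
  have hleft : (g * of y).toWord = (y, true) :: g.toWord := by
    rw [← hcomm]
    refine (toWord_mul_sublist _ _).eq_of_length ?_
    simp [hcomm, hright, toWord_of]
  have hlast := congrArg List.getLast? (hleft.symm.trans hright)
  rw [List.getLast?_cons, hℓ, List.getLast?_append_of_ne_nil _ (List.cons_ne_nil _ _)] at hlast
  simp only [Option.getD_some, List.getLast?_singleton, Option.some.injEq] at hlast
  exact hy (by rw [hlast])

theorem commute_of_subsingleton [Subsingleton α] (x y : FreeGroup α) : Commute x y := by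
  cases isEmpty_or_nonempty α
  · exact Subsingleton.elim _ _
  · have := uniqueOfSubsingleton (Classical.arbitrary α)
    exact IsMulCommutative.is_comm.comm x y

end FreeGroup

namespace IsFreeGroup

variable {F : Type*} [Group F] [IsFreeGroup F]

theorem commute_of_commute_of_ne_one {a x y : F} (ha : a ≠ 1) (hx : Commute a x)
    (hy : Commute a y) : Commute x y := by
  let C := Subgroup.centralizer ({a} : Set F)
  have mem_C {z : F} (h : Commute a z) : z ∈ C :=
    Subgroup.mem_centralizer_singleton_iff.2 h.symm.eq
  let e := IsFreeGroup.toFreeGroup C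
  rcases subsingleton_or_nontrivial (Generators C) with _ | _
  · have hC : Commute (⟨x, mem_C hx⟩ : C) ⟨y, mem_C hy⟩ := by
      simpa using (FreeGroup.commute_of_subsingleton (e ⟨x, mem_C hx⟩) (e ⟨y, mem_C hy⟩)).map e.symm
    exact hC.map C.subtype
  · let A : C := ⟨a, mem_C (Commute.refl a)⟩
    have hcen : e A ∈ Subgroup.center (FreeGroup (Generators C)) := by
      refine Subgroup.mem_center_iff.2 fun z => ?_
      have hcomm : e.symm z * A = A * e.symm z :=
        Subtype.ext (Subgroup.mem_centralizer_singleton_iff.1 (e.symm z).2)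
      simpa using congrArg e hcomm
    rw [FreeGroup.center_eq_bot, Subgroup.mem_bot, map_eq_one_iff _ e.injective] at hcen
    exact absurd (congrArg Subtype.val hcen) ha

theorem range_comm_of_mem_center_of_map_ne_one {G : Type*} [Group G] (f : G →* F) {g : G}
    (hg : g ∈ Subgroup.center G) (hfg : f g ≠ 1) :
    ∀ x ∈ f.range, ∀ y ∈ f.range, x * y = y * x := by
  have hg' (u : G) : Commute (f g) (f u) := Commute.map (Subgroup.mem_center_iff.1 hg u).symm f
  rintro _ ⟨u, rfl⟩ _ ⟨v, rfl⟩
  exact commute_of_commute_of_ne_one hfg (hg' u) (hg' v)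

end IsFreeGroup

/-- A group is residually non-abelian free iff it is residually free and has
trivial center. -/
theorem stmt_5 {G : Type*} [Group G] :
    (∀ g : G, g ≠ 1 → ∃ f : G →* FreeGroup (Fin 2),
        (¬ ∀ x ∈ f.range, ∀ y ∈ f.range, x * y = y * x) ∧ f g ≠ 1)
      ↔ ((∀ g : G, g ≠ 1 → ∃ f : G →* FreeGroup (Fin 2), f g ≠ 1)
          ∧ Subgroup.center G = ⊥) := by
  constructor
  · intro h
    refine ⟨fun g hg => (h g hg).imp fun f hf => hf.2,
      (Subgroup.eq_bot_iff_forall _).2 fun g hg => ?_⟩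
    by_contra hg1
    obtain ⟨f, hnc, hfg⟩ := h g hg1
    exact hnc (IsFreeGroup.range_comm_of_mem_center_of_map_ne_one f hg hfg)
  · rintro ⟨hres, hcen⟩ g hg
    obtain ⟨h, hhg⟩ : ∃ h, ¬ Commute h g := by
      have : g ∉ Subgroup.center G := by rwa [hcen, Subgroup.mem_bot]
      by_contra! hall
      exact this (Subgroup.mem_center_iff.2 hall)
    obtain ⟨f, hf⟩ := hres ⁅h, g⁆ (mt commutatorElement_eq_one_iff_commute.1 hhg)
    refine ⟨f, fun hcomm => hf ?_, fun hfg => hf ?_⟩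
    · rw [map_commutatorElement, commutatorElement_eq_one_iff_commute]
      exact hcomm _ ⟨h, rfl⟩ _ ⟨g, rfl⟩
    · rw [map_commutatorElement, hfg, commutatorElement_one_right]
end

section
/- Let F be a free group and let A ≤ F be a nontrivial subgroup. If A commutes elementwise with B, B^{x₁}, …, B^{xₚ} for some nontrivial subgroup B ≤ F and elements x₁,…,xₚ ∈ F, then the subgroup generated by A, B, x₁, …, xₚ is abelian. -/
/-!
Commuting elements of a free group generate an abelian subgroup, which is free by
Nielsen–Schreier and hence cyclic, since `of a` and `of b` do not commute for `a ≠ b`. A generator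
is not a proper power (look at its exponent sum), so whatever commutes with `of a` is a power of
`of a`; thus a nontrivial central element forces a single generator, and, by Nielsen–Schreier
again, the centralizer of any `g ≠ 1` is cyclic. So commuting is transitive on nontrivial elements.
If `x⁻¹ g x` commutes with `g`, conjugation by `x` preserves the centralizer `⟨d⟩` of `g`, hence
`x⁻¹ d x = d^{±1}`; in both cases `x²`, and then `x` itself, commutes with `d`.

For the theorem pick `a₀ ≠ 1` in `A` and `b₀ ≠ 1` in `B`: going through `a₀`, the elements of
`A`, of `B` and all `x_j` commute with `b₀`, so they lie in its abelian centralizer.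
-/

open Subgroup

namespace FreeGroup

variable {Γ : Type*}

theorem eq_of_commute_of {a b : Γ} (h : Commute (of a) (of b)) : a = b := by
  classical
  have h' : a = b ∧ b = a := by simpa [of, mul_mk] using congrArg toWord h.eq
  exact h'.1

theorem isCyclic_of_subsingleton [Subsingleton Γ] : IsCyclic (FreeGroup Γ) := by
  obtain ⟨g, hg⟩ : ∃ g : FreeGroup Γ, Set.range of ⊆ {g} := by
    cases isEmpty_or_nonempty Γ with
    | inl _ => exact ⟨1, by simp [Set.range_eq_empty]⟩
    | inr h =>
      obtain ⟨d⟩ := h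
      exact ⟨of d, by rintro _ ⟨b, rfl⟩; rw [Subsingleton.elim b d]; rfl⟩
  refine isCyclic_iff_exists_zpowers_eq_top.2 ⟨g, top_le_iff.1 ?_⟩
  rw [← closure_range_of, zpowers_eq_closure]
  exact closure_mono hg

def exponentSum [DecidableEq Γ] (a : Γ) : FreeGroup Γ →* Multiplicative ℤ :=
  FreeGroup.lift (Pi.mulSingle a (Multiplicative.ofAdd 1))

@[simp]
theorem exponentSum_of_self [DecidableEq Γ] (a : Γ) :
    exponentSum a (of a) = Multiplicative.ofAdd 1 := by
  simp [exponentSum]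

@[simp]
theorem exponentSum_of_of_ne [DecidableEq Γ] {a b : Γ} (h : b ≠ a) :
    exponentSum a (of b) = 1 := by
  simp [exponentSum, h]

end FreeGroup

namespace IsFreeGroup

variable {G : Type*} [Group G] [IsFreeGroup G]

instance isMulTorsionFree : IsMulTorsionFree G :=
  Function.Injective.isMulTorsionFree (toFreeGroup G).toMonoidHom (toFreeGroup G).injective

theorem isCyclic_of_isMulCommutative [IsMulCommutative G] : IsCyclic G := by
  let e := toFreeGroup G
  have : Subsingleton (Generators G) := ⟨fun a b => FreeGroup.eq_of_commute_of <| by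
    simpa [Commute, SemiconjBy] using congrArg e (mul_comm' (e.symm (.of a)) (e.symm (.of b)))⟩
  have := FreeGroup.isCyclic_of_subsingleton (Γ := Generators G)
  exact isCyclic_of_surjective e.symm e.symm.surjective

theorem exists_mem_zpowers_of_commute {a b : G} (h : Commute a b) :
    ∃ u : G, a ∈ zpowers u ∧ b ∈ zpowers u := by
  have : IsMulCommutative (closure {a, b}) := isMulCommutative_closure <| by
    rintro x (rfl | rfl) y (rfl | rfl)
    exacts [rfl, h.eq, h.symm.eq, rfl]
  obtain ⟨u, hu⟩ := (Subgroup.isCyclic_iff_exists_zpowers_eq_top _).1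
    (isCyclic_of_isMulCommutative (G := closure {a, b}))
  exact ⟨u, hu ▸ subset_closure (by simp), hu ▸ subset_closure (by simp)⟩

end IsFreeGroup

namespace FreeGroup

variable {Γ : Type*}

theorem mem_zpowers_of_commute_of {z : FreeGroup Γ} {a : Γ} (h : Commute z (of a)) :
    z ∈ zpowers (of a) := by
  classical
  obtain ⟨u, hz, ha⟩ := IsFreeGroup.exists_mem_zpowers_of_commute h
  obtain ⟨i, rfl⟩ := mem_zpowers_iff.1 hz
  obtain ⟨j, hj⟩ := mem_zpowers_iff.1 ha
  have hj_mul : j * (exponentSum a u).toAdd = 1 := by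
    simpa using congrArg (fun w => (exponentSum a w).toAdd) hj
  have hjj : j * j = 1 := by
    rcases Int.eq_one_or_neg_one_of_mul_eq_one hj_mul with rfl | rfl <;> rfl
  refine mem_zpowers_iff.2 ⟨j * i, ?_⟩
  rw [← hj, ← zpow_mul, ← mul_assoc, hjj, one_mul]

theorem subsingleton_of_mem_center {z : FreeGroup Γ} (hz : z ∈ center (FreeGroup Γ))
    (hz1 : z ≠ 1) : Subsingleton Γ := by
  classical
  refine ⟨fun a b => by_contra fun hab => hz1 ?_⟩
  obtain ⟨i, rfl⟩ :=
    mem_zpowers_iff.1 <| mem_zpowers_of_commute_of (mem_center_iff.1 hz (of a)).symm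
  obtain ⟨k, hk⟩ :=
    mem_zpowers_iff.1 <| mem_zpowers_of_commute_of (mem_center_iff.1 hz (of b)).symm
  have hi : 0 = i := by
    simpa [Ne.symm hab] using congrArg (fun w => (exponentSum a w).toAdd) hk
  simp [← hi]

end FreeGroup

namespace IsFreeGroup

variable {G : Type*} [Group G] [IsFreeGroup G]

theorem isCyclic_of_mem_center {z : G} (hz : z ∈ center G) (hz1 : z ≠ 1) : IsCyclic G := by
  let e := toFreeGroup G
  have : Subsingleton (Generators G) := FreeGroup.subsingleton_of_mem_center (z := e z)
    (mem_center_iff.2 fun g => by simpa using congrArg e (mem_center_iff.1 hz (e.symm g)))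
    (by simpa using hz1)
  have := FreeGroup.isCyclic_of_subsingleton (Γ := Generators G)
  exact isCyclic_of_surjective e.symm e.symm.surjective

theorem isCyclic_centralizer {g : G} (hg : g ≠ 1) : IsCyclic (centralizer {g}) :=
  isCyclic_of_mem_center (z := ⟨g, mem_centralizer_singleton_iff.2 rfl⟩)
    (mem_center_iff.2 fun y => Subtype.ext (mem_centralizer_singleton_iff.1 y.2))
    (by simpa [← Subtype.val_inj] using hg)

theorem commute_trans {a b c : G} (hab : Commute a b) (hbc : Commute b c) (hb : b ≠ 1) :
    Commute a c :=
  have := isCyclic_centralizer hb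
  setLike_mul_comm (s := centralizer {b})
    (mem_centralizer_singleton_iff.2 hab.eq) (mem_centralizer_singleton_iff.2 hbc.symm.eq)

theorem commute_of_zpowers_conj_eq {d x : G} (h : zpowers d = zpowers (x⁻¹ * d * x)) :
    Commute x d := by
  rcases eq_or_ne d 1 with rfl | hd
  · exact Commute.one_right x
  rcases (zpowers_eq_zpowers_iff (not_isOfFinOrder_of_isMulTorsionFree hd)).1 h with hfix | hinv
  · show x * d = d * x
    nth_rw 1 [hfix]
    group
  · have hd_eq : d = x⁻¹ * d⁻¹ * x :=
      calc d = (x⁻¹ * d * x)⁻¹ := by rw [← hinv, inv_inv]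
        _ = x⁻¹ * d⁻¹ * x := by group
    have hsq : Commute (x ^ 2) d := by
      show x ^ 2 * d = d * x ^ 2
      rw [sq]
      nth_rw 1 [hd_eq, hinv]
      group
    rcases eq_or_ne x 1 with rfl | hx
    · exact Commute.one_left d
    · exact commute_trans (Commute.self_pow x 2) hsq (by rwa [Ne, sq_eq_one])

theorem commute_of_commute_conj {g x : G} (h : Commute g (x⁻¹ * g * x)) : Commute x g := by
  rcases eq_or_ne g 1 with rfl | hg
  · exact Commute.one_right x
  obtain ⟨d, hd⟩ := (Subgroup.isCyclic_iff_exists_zpowers_eq_top _).1 (isCyclic_centralizer hg)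
  have mem_iff (y : G) : y ∈ zpowers d ↔ Commute y g := by
    rw [hd, mem_centralizer_singleton_iff]; rfl
  obtain ⟨n, rfl⟩ := mem_zpowers_iff.1 <| (mem_iff g).2 (Commute.refl g)
  have hconj_ne : x⁻¹ * d ^ n * x ≠ 1 := by simpa [mul_assoc, inv_mul_eq_one] using hg
  have hd_comm : Commute d (d ^ n) := Commute.self_zpow d n
  have hdx : x⁻¹ * d * x ∈ zpowers d := by
    rw [mem_iff]
    exact commute_trans (by simpa [mul_assoc] using hd_comm.conj x⁻¹) h.symm hconj_ne
  obtain ⟨l, hl⟩ : ∃ l : ℤ, d ^ l = x * d * x⁻¹ := by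
    rw [← mem_zpowers_iff, mem_iff]
    simpa [mul_assoc] using (commute_trans hd_comm h hg).conj x
  have hd_mem : d ∈ zpowers (x⁻¹ * d * x) := mem_zpowers_iff.2 ⟨l, by
    calc (x⁻¹ * d * x) ^ l = x⁻¹ * d ^ l * x := by simpa using conj_zpow (a := x⁻¹) (b := d)
      _ = d := by rw [hl]; group⟩
  exact (commute_of_zpowers_conj_eq <|
    le_antisymm (zpowers_le.2 hd_mem) (zpowers_le.2 hdx)).zpow_right n

end IsFreeGroup

/-- In a free group `F`, if a nontrivial subgroup `A` commutes elementwise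
with `B, B^{x₁}, …, B^{xₚ}` for a nontrivial subgroup `B` and elements
`x₁, …, xₚ`, then `⟨A, B, x₁, …, xₚ⟩` is abelian. -/
theorem stmt_13 {α : Type*} (A B : Subgroup (FreeGroup α))
    (hA : A ≠ ⊥) (hB : B ≠ ⊥) {p : ℕ} (x : Fin p → FreeGroup α)
    (hcomm : ∀ a ∈ A, ∀ b ∈ B, a * b = b * a)
    (hconj : ∀ j : Fin p, ∀ a ∈ A, ∀ b ∈ B,
      a * ((x j)⁻¹ * b * x j) = ((x j)⁻¹ * b * x j) * a) :
    ∀ u ∈ Subgroup.closure ((A : Set (FreeGroup α)) ∪ B ∪ Set.range x),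
    ∀ v ∈ Subgroup.closure ((A : Set (FreeGroup α)) ∪ B ∪ Set.range x),
      u * v = v * u := by
  obtain ⟨a₀, ha₀A, ha₀⟩ := A.bot_or_exists_ne_one.resolve_left hA
  obtain ⟨b₀, hb₀B, hb₀⟩ := B.bot_or_exists_ne_one.resolve_left hB
  have hgen : (A : Set (FreeGroup α)) ∪ B ∪ Set.range x ⊆ centralizer {b₀} := by
    rintro g ((ha | hb) | ⟨j, rfl⟩) <;> rw [SetLike.mem_coe, mem_centralizer_singleton_iff]
    · exact hcomm g ha b₀ hb₀B
    · exact IsFreeGroup.commute_trans (hcomm a₀ ha₀A g hb).symm (hcomm a₀ ha₀A b₀ hb₀B) ha₀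
    · exact IsFreeGroup.commute_of_commute_conj <| IsFreeGroup.commute_trans
        (hcomm a₀ ha₀A b₀ hb₀B).symm (hconj j a₀ ha₀A b₀ hb₀B) ha₀
  have := IsFreeGroup.isCyclic_centralizer hb₀
  intro u hu v hv
  exact setLike_mul_comm (closure_le _ |>.2 hgen hu) (closure_le _ |>.2 hgen hv)
end
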